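/- Let (X,d,μ) be an mm-space, let κ be a real number with 0 < κ ≤ 1/2, and let δ > sep_κ(X), where sep_κ is the κ-separation distance. Then α_X(δ) ≤ κ, where α_X is the concentration function of X. (This is the inequality α_X(sep_κ(X)) ≤ κ relating the concentration function and the separation distance, stated for every δ strictly above sep_κ(X).) -/

import Mathlib

/-! If `α_X(δ) > κ`, some `A` with `μ(A) ≥ 1/2 ≥ κ` has `μ(A_δ) < 1 - κ`, so `A` and the complement
of `A_δ` are two sets of measure `≥ κ` at distance `≥ δ`, forcing `δ ≤ sep_κ(X)`. The supremum
defining `sep_κ(X)` is finite because a large ball carries all but less than `κ` of the mass, so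
any two sets of measure `≥ κ` meet it. -/

open MeasureTheory Metric Filter

/-- The concentration function of an mm-space `(X, d, μ)`:
`α_X(ε) = 1 − inf{ μ(A_ε) : A Borel, μ(A) ≥ 1/2 }`, where `A_ε` is the
open `ε`-thickening of `A`. -/
noncomputable def concFn {X : Type*} [PseudoMetricSpace X] [MeasurableSpace X]
    (μ : Measure X) (ε : ℝ) : ℝ :=
  1 - sInf {r : ℝ | ∃ A : Set X, MeasurableSet A ∧ 1 / 2 ≤ (μ A).toReal ∧
      r = (μ (Metric.thickening ε A)).toReal}

/-- The `κ`-separation distance of an mm-space `(X, d, μ)`: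
`sep_κ(X) = sup{δ ≥ 0 : ∃ Borel A, B with μ(A) ≥ κ, μ(B) ≥ κ and
d(a,b) ≥ δ for all a ∈ A, b ∈ B}`. -/
noncomputable def sepDist {X : Type*} [PseudoMetricSpace X] [MeasurableSpace X]
    (μ : Measure X) (κ : ℝ) : ℝ :=
  sSup {δ : ℝ | 0 ≤ δ ∧ ∃ A B : Set X, MeasurableSet A ∧ MeasurableSet B ∧
      κ ≤ (μ A).toReal ∧ κ ≤ (μ B).toReal ∧ ∀ a ∈ A, ∀ b ∈ B, δ ≤ dist a b}

theorem sepDist_nonneg {X : Type*} [PseudoMetricSpace X] [MeasurableSpace X] (μ : Measure X)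
    (κ : ℝ) : 0 ≤ sepDist μ κ :=
  Real.sSup_nonneg fun _ hδ => hδ.1

section Separation

variable {X : Type*} [PseudoMetricSpace X] [MeasurableSpace X] [OpensMeasurableSpace X]
  (μ : Measure X) [IsFiniteMeasure μ]

theorem exists_measure_compl_closedBall_lt (x : X) {ε : ENNReal} (hε : 0 < ε) :
    ∃ n : ℕ, μ (closedBall x n)ᶜ < ε := by
  have hlim : Tendsto (fun n : ℕ => μ (closedBall x n)ᶜ) atTop (nhds 0) := by
    have := tendsto_measure_iInter_atTop (μ := μ) (s := fun n : ℕ => (closedBall x n)ᶜ)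
      (fun _ => measurableSet_closedBall.compl.nullMeasurableSet)
      (fun _ _ h => Set.compl_subset_compl.2 (closedBall_subset_closedBall (by exact_mod_cast h)))
      ⟨0, measure_ne_top μ _⟩
    rwa [← Set.compl_iUnion, iUnion_closedBall_nat, Set.compl_univ, measure_empty] at this
  exact (hlim.eventually_lt_const hε).exists

theorem bddAbove_separation_set {κ : ℝ} (hκ : 0 < κ) :
    BddAbove {δ : ℝ | 0 ≤ δ ∧ ∃ A B : Set X, MeasurableSet A ∧ MeasurableSet B ∧
      κ ≤ (μ A).toReal ∧ κ ≤ (μ B).toReal ∧ ∀ a ∈ A, ∀ b ∈ B, δ ≤ dist a b} := by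
  rcases isEmpty_or_nonempty X with _ | ⟨⟨x⟩⟩
  · refine ⟨0, fun δ ⟨_, A, _, _, _, hA, _⟩ => ?_⟩
    rw [Set.eq_empty_of_isEmpty A, measure_empty, ENNReal.toReal_zero] at hA
    linarith
  obtain ⟨n, hn⟩ := exists_measure_compl_closedBall_lt μ x (ENNReal.ofReal_pos.2 hκ)
  have meets_ball : ∀ A : Set X, κ ≤ (μ A).toReal → ∃ a ∈ A, dist a x ≤ n := by
    intro A hA
    by_contra! hfar
    have hsub : A ⊆ (closedBall x n)ᶜ := fun a ha => not_le.2 (hfar a ha)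
    have := (ENNReal.ofReal_le_of_le_toReal hA).trans (measure_mono hsub)
    exact this.not_gt hn
  refine ⟨2 * n, fun δ ⟨_, A, B, _, _, hA, hB, hAB⟩ => ?_⟩
  obtain ⟨a, ha, hax⟩ := meets_ball A hA
  obtain ⟨b, hb, hbx⟩ := meets_ball B hB
  linarith [hAB a ha b hb, dist_triangle_right a b x]

theorem le_sepDist {κ δ : ℝ} (hκ : 0 < κ) (hδ : 0 ≤ δ) {A B : Set X} (hAm : MeasurableSet A)
    (hBm : MeasurableSet B) (hA : κ ≤ (μ A).toReal) (hB : κ ≤ (μ B).toReal)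
    (hAB : ∀ a ∈ A, ∀ b ∈ B, δ ≤ dist a b) : δ ≤ sepDist μ κ :=
  le_csSup (bddAbove_separation_set μ hκ) ⟨hδ, A, B, hAm, hBm, hA, hB, hAB⟩

end Separation

section Concentration

variable {X : Type*} [PseudoMetricSpace X] [MeasurableSpace X] (μ : Measure X)
  [IsProbabilityMeasure μ]

theorem concFn_le_of_forall_le_measure_thickening {κ ε : ℝ}
    (h : ∀ A : Set X, MeasurableSet A → 1 / 2 ≤ (μ A).toReal →
      1 - κ ≤ (μ (thickening ε A)).toReal) :
    concFn μ ε ≤ κ := by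
  have hne : (μ (thickening ε Set.univ)).toReal ∈ {r : ℝ | ∃ A : Set X, MeasurableSet A ∧
      1 / 2 ≤ (μ A).toReal ∧ r = (μ (thickening ε A)).toReal} :=
    ⟨Set.univ, MeasurableSet.univ, by norm_num, rfl⟩
  have := le_csInf ⟨_, hne⟩ fun r ⟨A, hAm, hA, hr⟩ => hr ▸ h A hAm hA
  rw [concFn]
  linarith

theorem one_sub_le_measure_thickening_of_sepDist_lt [OpensMeasurableSpace X] {κ δ : ℝ}
    (hκ : 0 < κ) (hδ : sepDist μ κ < δ) {A : Set X} (hAm : MeasurableSet A)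
    (hA : κ ≤ (μ A).toReal) :
    1 - κ ≤ (μ (thickening δ A)).toReal := by
  by_contra! hthick
  have hBm : MeasurableSet (thickening δ A)ᶜ := isOpen_thickening.measurableSet.compl
  have hB : κ ≤ (μ (thickening δ A)ᶜ).toReal := by
    rw [prob_compl_eq_one_sub isOpen_thickening.measurableSet,
      ENNReal.toReal_sub_of_le prob_le_one ENNReal.one_ne_top, ENNReal.toReal_one]
    linarith
  have hsep : ∀ a ∈ A, ∀ b ∈ (thickening δ A)ᶜ, δ ≤ dist a b := by
    intro a ha b hb
    rw [dist_comm]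
    exact not_lt.1 fun hlt => hb (mem_thickening_iff.2 ⟨a, ha, hlt⟩)
  have hδ0 : 0 ≤ δ := (sepDist_nonneg μ κ).trans hδ.le
  exact (le_sepDist μ hκ hδ0 hAm hBm hA hB hsep).not_gt hδ

end Concentration

/-- For `0 < κ ≤ 1/2` and any `δ > sep_κ(X)` one has `α_X(δ) ≤ κ`:
the inequality `α_X(sep_κ(X)) ≤ κ` stated for every `δ` strictly above `sep_κ(X)`. -/
theorem stmt3 {X : Type*} [MetricSpace X] [MeasurableSpace X] [BorelSpace X]
    (μ : Measure X) [IsProbabilityMeasure μ] (κ δ : ℝ)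
    (hκ0 : 0 < κ) (hκ : κ ≤ 1 / 2) (hδ : sepDist μ κ < δ) :
    concFn μ δ ≤ κ :=
  concFn_le_of_forall_le_measure_thickening μ fun _ hAm hA =>
    one_sub_le_measure_thickening_of_sepDist_lt μ hκ0 hδ hAm (hκ.trans hA)
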